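/- Equality E(φ₀, φ₁) = 4π in the Bogomolny bound (with φ₀(0⁺)=0, φ₀(∞)=π) holds if and only if φ₁ = 0 and φ₀(r) = Q(r/λ) = 2·arctan(r/λ) for some λ > 0. -/

import Mathlib

/-!
Completing the square (Bogomolny's trick),
`(φ₀'² + sin² φ₀ / r²) r = (φ₀' - sin φ₀ / r)² r + 2 φ₀' sin φ₀`,
and the last term integrates to `[-2 cos φ₀]₀^∞ = 4` under the boundary conditions. Hence
`E = π (∫ φ₁² r + ∫ (φ₀' - sin φ₀ / r)² r) + 4π`, with equality iff `φ₁ = 0` and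
`φ₀' = sin φ₀ / r`. This ODE is Lipschitz in `φ₀` uniformly on compact subsets of `r > 0`, so a
solution is determined by one of its values. Comparing with the constant solutions `kπ` shows
that `φ₀` stays in `(0, π)`, and comparing with the solution `2 arctan (r / λ)` through
`(1, φ₀ 1)` identifies `φ₀`.
-/

open MeasureTheory Set Filter Real Topology

lemma eqOn_of_hasDerivAt_of_ae_eq {f f' g : ℝ → ℝ} {s : Set ℝ} (hs : IsOpen s)
    (hf : ∀ x ∈ s, HasDerivAt f (f' x) x) (hg : ContinuousOn g s)
    (h : f' =ᵐ[volume.restrict s] g) : EqOn f' g s := by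
  intro x hx
  obtain ⟨ε, hε, hball⟩ := Metric.isOpen_iff.1 hs x hx
  have hsub : ∀ y ∈ Metric.ball x ε, uIcc x y ⊆ s := fun y hy =>
    (Real.ball_eq_Ioo x ε ▸ ordConnected_Ioo.uIcc_subset
      (Real.ball_eq_Ioo x ε ▸ Metric.mem_ball_self hε) (Real.ball_eq_Ioo x ε ▸ hy)).trans hball
  have hFTC : ∀ y ∈ Metric.ball x ε, f y = f x + ∫ t in x..y, g t := by
    intro y hy
    have hae : f' =ᵐ[volume.restrict (uIoc x y)] g :=
      ae_restrict_of_ae_restrict_of_subset (uIoc_subset_uIcc.trans (hsub y hy)) h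
    have hgi : IntervalIntegrable g volume x y := (hg.mono (hsub y hy)).intervalIntegrable
    rw [← intervalIntegral.integral_congr_ae (ae_restrict_iff' measurableSet_uIoc |>.1 hae),
      intervalIntegral.integral_eq_sub_of_hasDerivAt (fun t ht => hf t (hsub y hy ht))
        (hgi.congr_ae hae.symm)]
    ring
  have hF : HasDerivAt (fun y => f x + ∫ t in x..y, g t) (g x) x :=
    (intervalIntegral.integral_hasDerivAt_right IntervalIntegrable.refl
      (hg.stronglyMeasurableAtFilter hs x hx) (hg.continuousAt (hs.mem_nhds hx))).const_add _
  exact (hf x hx).unique <|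
    hF.congr_of_eventuallyEq (eventually_of_mem (Metric.ball_mem_nhds x hε) hFTC)

theorem integral_Ioi_of_hasDerivAt_of_tendsto_nhdsGT {E : Type*} [NormedAddCommGroup E]
    [NormedSpace ℝ E] [CompleteSpace E] {f f' : ℝ → E} {a : ℝ} {l m : E}
    (hderiv : ∀ x ∈ Ioi a, HasDerivAt f (f' x) x) (f'int : IntegrableOn f' (Ioi a))
    (ha : Tendsto f (𝓝[>] a) (𝓝 l)) (hf : Tendsto f atTop (𝓝 m)) :
    ∫ x in Ioi a, f' x = m - l := by
  classical
  have hupd : EqOn (Function.update f a l) f (Ioi a) := fun x hx =>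
    Function.update_of_ne (ne_of_gt hx) _ _
  have hcont : ContinuousWithinAt (Function.update f a l) (Ici a) a := by
    rwa [← continuousWithinAt_Ioi_iff_Ici, continuousWithinAt_update_same,
      sdiff_singleton_eq_self (self_notMem_Ioi (a := a))]
  have h := integral_Ioi_of_hasDerivAt_of_tendsto hcont
    (fun x hx => (hderiv x hx).congr_of_eventuallyEq (hupd.eventuallyEq_of_mem (Ioi_mem_nhds hx)))
    f'int (hf.congr' (hupd.eventuallyEq_of_mem (Ioi_mem_atTop a)).symm)
  rwa [Function.update_self] at h

lemma hasDerivAt_two_mul_arctan_div (lam : ℝ) {r : ℝ} (hr : r ≠ 0) :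
    HasDerivAt (fun s => 2 * arctan (s / lam)) (sin (2 * arctan (r / lam)) / r) r := by
  have hsin : sin (2 * arctan (r / lam)) = 2 * (r / lam) / (1 + (r / lam) ^ 2) := by
    rw [sin_two_mul, sin_arctan, cos_arctan, mul_assoc, div_mul_div_comm, mul_one,
      mul_self_sqrt (by positivity), mul_div_assoc]
  refine ((((hasDerivAt_id r).div_const lam).arctan).const_mul 2).congr_deriv ?_
  rw [hsin, id]
  field_simp

lemma eqOn_Ioi_of_hasDerivAt_sin_div {f g : ℝ → ℝ}
    (hf : ∀ r ∈ Ioi (0 : ℝ), HasDerivAt f (sin (f r) / r) r)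
    (hg : ∀ r ∈ Ioi (0 : ℝ), HasDerivAt g (sin (g r) / r) r)
    {r₀ : ℝ} (hr₀ : 0 < r₀) (h : f r₀ = g r₀) : EqOn f g (Ioi 0) := by
  intro r (hr : 0 < r)
  obtain ⟨a, ha, har, har₀⟩ : ∃ a, 0 < a ∧ a < r ∧ a < r₀ :=
    ⟨min r r₀ / 2, by positivity, by linarith [lt_min hr hr₀, min_le_left r r₀],
      by linarith [lt_min hr hr₀, min_le_right r r₀]⟩
  have hlip : ∀ t ∈ Ioo a (r + r₀), LipschitzOnWith a⁻¹.toNNReal (fun x => sin x / t) univ := by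
    refine fun t ht => LipschitzOnWith.of_dist_le_mul fun x _ y _ => ?_
    have ht0 : 0 < t := ha.trans ht.1
    have hat : 1 ≤ a⁻¹ * t := by rw [inv_mul_eq_div, one_le_div ha]; exact ht.1.le
    rw [Real.dist_eq, Real.dist_eq, ← sub_div, abs_div, abs_of_pos ht0,
      Real.coe_toNNReal _ (inv_nonneg.2 ha.le), div_le_iff₀ ht0]
    nlinarith [abs_sin_sub_sin_le x y, abs_nonneg (x - y)]
  exact ODE_solution_unique_of_mem_Ioo hlip ⟨har₀, by linarith⟩
    (fun t ht => ⟨hf t (ha.trans ht.1), mem_univ _⟩)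
    (fun t ht => ⟨hg t (ha.trans ht.1), mem_univ _⟩) h ⟨har, by linarith⟩

lemma sin_ne_zero_of_hasDerivAt_sin_div {φ : ℝ → ℝ}
    (hφ : ∀ r ∈ Ioi (0 : ℝ), HasDerivAt φ (sin (φ r) / r) r)
    (h0 : Tendsto φ (𝓝[>] 0) (𝓝 0)) (hinf : Tendsto φ atTop (𝓝 π)) {r : ℝ} (hr : 0 < r) :
    sin (φ r) ≠ 0 := by
  intro hsin
  obtain ⟨n, hn⟩ := sin_eq_zero_iff.1 hsin
  have hconst : EqOn φ (fun _ => n * π) (Ioi 0) :=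
    eqOn_Ioi_of_hasDerivAt_sin_div hφ
      (fun s _ => by simpa [sin_int_mul_pi] using hasDerivAt_const s ((n : ℝ) * π)) hr hn.symm
  have hlim0 : (n : ℝ) * π = 0 :=
    tendsto_nhds_unique (tendsto_const_nhds.congr' (eventuallyEq_nhdsWithin_of_eqOn hconst).symm) h0
  have hliminf : (n : ℝ) * π = π :=
    tendsto_nhds_unique
      (tendsto_const_nhds.congr' (hconst.eventuallyEq_of_mem (Ioi_mem_atTop 0)).symm) hinf
  exact pi_ne_zero (hliminf.symm.trans hlim0)

lemma mem_Ioo_zero_pi_of_hasDerivAt_sin_div {φ : ℝ → ℝ}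
    (hφ : ∀ r ∈ Ioi (0 : ℝ), HasDerivAt φ (sin (φ r) / r) r)
    (h0 : Tendsto φ (𝓝[>] 0) (𝓝 0)) (hinf : Tendsto φ atTop (𝓝 π)) {r : ℝ} (hr : 0 < r) :
    φ r ∈ Ioo 0 π := by
  have hconn : IsPreconnected (φ '' Ioi 0) :=
    isPreconnected_Ioi.image φ fun r hr => (hφ r hr).continuousAt.continuousWithinAt
  have hsin : ∀ x ∈ φ '' Ioi 0, sin x ≠ 0 := by
    rintro _ ⟨s, hs, rfl⟩
    exact sin_ne_zero_of_hasDerivAt_sin_div hφ h0 hinf hs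
  obtain ⟨s, hs, hs0⟩ := ((h0.eventually (gt_mem_nhds pi_pos)).and self_mem_nhdsWithin).exists
  obtain ⟨t, ht, ht0⟩ := ((hinf.eventually (lt_mem_nhds pi_pos)).and (Ioi_mem_atTop 0)).exists
  constructor
  · by_contra! h
    exact hsin 0 (hconn.Icc_subset (mem_image_of_mem φ hr) (mem_image_of_mem φ ht0) ⟨h, ht.le⟩)
      sin_zero
  · by_contra! h
    exact hsin π (hconn.Icc_subset (mem_image_of_mem φ hs0) (mem_image_of_mem φ hr) ⟨hs.le, h⟩)
      sin_pi

theorem exists_eq_two_mul_arctan_of_hasDerivAt_sin_div {φ : ℝ → ℝ}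
    (hφ : ∀ r ∈ Ioi (0 : ℝ), HasDerivAt φ (sin (φ r) / r) r)
    (h0 : Tendsto φ (𝓝[>] 0) (𝓝 0)) (hinf : Tendsto φ atTop (𝓝 π)) :
    ∃ lam > 0, ∀ r ∈ Ioi (0 : ℝ), φ r = 2 * arctan (r / lam) := by
  obtain ⟨hpos, hlt⟩ := mem_Ioo_zero_pi_of_hasDerivAt_sin_div hφ h0 hinf one_pos
  have htan : 0 < tan (φ 1 / 2) := tan_pos_of_pos_of_lt_pi_div_two (by linarith) (by linarith)
  refine ⟨(tan (φ 1 / 2))⁻¹, inv_pos.2 htan, fun r hr =>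
    eqOn_Ioi_of_hasDerivAt_sin_div hφ (fun s hs => hasDerivAt_two_mul_arctan_div _ hs.ne')
      one_pos ?_ hr⟩
  rw [div_inv_eq_mul, one_mul, arctan_tan (by linarith [pi_pos]) (by linarith)]
  ring

theorem forall_deriv_eq_sin_div_iff {φ φ' : ℝ → ℝ}
    (hderiv : ∀ r ∈ Ioi (0 : ℝ), HasDerivAt φ (φ' r) r)
    (h0 : Tendsto φ (𝓝[>] 0) (𝓝 0)) (hinf : Tendsto φ atTop (𝓝 π)) :
    (∀ r ∈ Ioi (0 : ℝ), φ' r = sin (φ r) / r) ↔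
      ∃ lam > 0, ∀ r ∈ Ioi (0 : ℝ), φ r = 2 * arctan (r / lam) := by
  refine ⟨fun hode => exists_eq_two_mul_arctan_of_hasDerivAt_sin_div
    (fun r hr => hode r hr ▸ hderiv r hr) h0 hinf, ?_⟩
  rintro ⟨lam, -, hQ⟩ r hr
  rw [hQ r hr]
  exact (hderiv r hr).unique <| (hasDerivAt_two_mul_arctan_div lam hr.ne').congr_of_eventuallyEq
    (EqOn.eventuallyEq_of_mem hQ (Ioi_mem_nhds hr))

lemma bogomolny_identity (a s : ℝ) {r : ℝ} (hr : r ≠ 0) :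
    (a ^ 2 + s ^ 2 / r ^ 2) * r = (a - s / r) ^ 2 * r + 2 * (a * s) := by
  field_simp
  ring

lemma abs_mul_le_sq_mul_add_sq_div_sq_mul (a s : ℝ) {r : ℝ} (hr : 0 < r) :
    |a * s| ≤ a ^ 2 * r + s ^ 2 / r ^ 2 * r := by
  have h₁ := bogomolny_identity a s hr.ne'
  have h₂ := bogomolny_identity a (-s) hr.ne'
  rw [neg_sq] at h₂
  rw [abs_le]
  constructor <;> nlinarith [mul_nonneg (sq_nonneg (a - s / r)) hr.le,
    mul_nonneg (sq_nonneg (a - -s / r)) hr.le]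

lemma integrableOn_deriv_mul_sin {φ φ' : ℝ → ℝ}
    (hderiv : ∀ r ∈ Ioi (0 : ℝ), HasDerivAt φ (φ' r) r)
    (hint₁ : IntegrableOn (fun r => φ' r ^ 2 * r) (Ioi 0))
    (hint₂ : IntegrableOn (fun r => sin (φ r) ^ 2 / r ^ 2 * r) (Ioi 0)) :
    IntegrableOn (fun r => φ' r * sin (φ r)) (Ioi 0) := by
  have hφ' : AEStronglyMeasurable φ' (volume.restrict (Ioi 0)) :=
    (measurable_deriv φ).aestronglyMeasurable.congr <|
      (ae_restrict_iff' measurableSet_Ioi).2 (Eventually.of_forall fun r hr => (hderiv r hr).deriv)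
  have hsin : AEStronglyMeasurable (fun r => sin (φ r)) (volume.restrict (Ioi 0)) :=
    (continuous_sin.comp_continuousOn (HasDerivAt.continuousOn hderiv)).aestronglyMeasurable
      measurableSet_Ioi
  exact (hint₁.add hint₂).mono' (hφ'.mul hsin) <| (ae_restrict_iff' measurableSet_Ioi).2 <|
    Eventually.of_forall fun r hr => abs_mul_le_sq_mul_add_sq_div_sq_mul _ _ hr

lemma integral_Ioi_deriv_mul_sin {φ φ' : ℝ → ℝ} {a α β : ℝ}
    (hderiv : ∀ r ∈ Ioi a, HasDerivAt φ (φ' r) r)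
    (hint : IntegrableOn (fun r => φ' r * sin (φ r)) (Ioi a))
    (ha : Tendsto φ (𝓝[>] a) (𝓝 α)) (hinf : Tendsto φ atTop (𝓝 β)) :
    ∫ r in Ioi a, φ' r * sin (φ r) = cos α - cos β := by
  rw [integral_Ioi_of_hasDerivAt_of_tendsto_nhdsGT (f := fun r => -cos (φ r))
    (fun r hr => (hderiv r hr).cos.neg.congr_deriv (by ring)) hint
    ((continuous_cos.tendsto α).comp ha).neg ((continuous_cos.tendsto β).comp hinf).neg]
  ring

lemma integrableOn_deriv_sub_sin_div_sq_mul {φ φ' : ℝ → ℝ}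
    (hderiv : ∀ r ∈ Ioi (0 : ℝ), HasDerivAt φ (φ' r) r)
    (hint₁ : IntegrableOn (fun r => φ' r ^ 2 * r) (Ioi 0))
    (hint₂ : IntegrableOn (fun r => sin (φ r) ^ 2 / r ^ 2 * r) (Ioi 0)) :
    IntegrableOn (fun r => (φ' r - sin (φ r) / r) ^ 2 * r) (Ioi 0) := by
  have hcross := (integrableOn_deriv_mul_sin hderiv hint₁ hint₂).const_mul 2
  refine ((hint₁.add hint₂).sub hcross).congr_fun (fun r (hr : 0 < r) => ?_) measurableSet_Ioi
  simp only [Pi.add_apply, Pi.sub_apply, ← add_mul, bogomolny_identity _ _ hr.ne']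
  ring

lemma setIntegral_sq_mul_eq_zero_iff {f : ℝ → ℝ}
    (hf : IntegrableOn (fun r => f r ^ 2 * r) (Ioi 0)) :
    ∫ r in Ioi (0 : ℝ), f r ^ 2 * r = 0 ↔ f =ᵐ[volume.restrict (Ioi 0)] 0 := by
  have hnn : 0 ≤ᵐ[volume.restrict (Ioi 0)] fun r => f r ^ 2 * r :=
    (ae_restrict_iff' measurableSet_Ioi).2 <|
      Eventually.of_forall fun r (hr : 0 < r) => mul_nonneg (sq_nonneg _) hr.le
  rw [integral_eq_zero_iff_of_nonneg_ae hnn hf]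
  refine eventually_congr <| (ae_restrict_iff' measurableSet_Ioi).2 <|
    Eventually.of_forall fun r (hr : 0 < r) => ?_
  simp [hr.ne']

theorem integral_energy_eq {φ₀ φ₁ φ₀' : ℝ → ℝ}
    (hderiv : ∀ r ∈ Ioi (0 : ℝ), HasDerivAt φ₀ (φ₀' r) r)
    (h0 : Tendsto φ₀ (𝓝[>] 0) (𝓝 0)) (hinf : Tendsto φ₀ atTop (𝓝 π))
    (hint₁ : IntegrableOn (fun r => φ₁ r ^ 2 * r) (Ioi 0))
    (hint₂ : IntegrableOn (fun r => φ₀' r ^ 2 * r) (Ioi 0))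
    (hint₃ : IntegrableOn (fun r => sin (φ₀ r) ^ 2 / r ^ 2 * r) (Ioi 0)) :
    ∫ r in Ioi (0 : ℝ), (φ₁ r ^ 2 + φ₀' r ^ 2 + sin (φ₀ r) ^ 2 / r ^ 2) * r =
      (∫ r in Ioi (0 : ℝ), φ₁ r ^ 2 * r) +
        (∫ r in Ioi (0 : ℝ), (φ₀' r - sin (φ₀ r) / r) ^ 2 * r) + 4 := by
  have hcross₀ := integrableOn_deriv_mul_sin hderiv hint₂ hint₃
  have hcross := hcross₀.const_mul 2
  have hdev := integrableOn_deriv_sub_sin_div_sq_mul hderiv hint₂ hint₃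
  have hsum : IntegrableOn
      (fun r => (φ₀' r - sin (φ₀ r) / r) ^ 2 * r + 2 * (φ₀' r * sin (φ₀ r))) (Ioi 0) :=
    hdev.add hcross
  calc ∫ r in Ioi (0 : ℝ), (φ₁ r ^ 2 + φ₀' r ^ 2 + sin (φ₀ r) ^ 2 / r ^ 2) * r
      = ∫ r in Ioi (0 : ℝ), φ₁ r ^ 2 * r +
          ((φ₀' r - sin (φ₀ r) / r) ^ 2 * r + 2 * (φ₀' r * sin (φ₀ r))) := by
        refine setIntegral_congr_fun measurableSet_Ioi fun r (hr : 0 < r) => ?_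
        rw [add_assoc, add_mul, bogomolny_identity _ _ hr.ne']
    _ = (∫ r in Ioi (0 : ℝ), φ₁ r ^ 2 * r) +
          ((∫ r in Ioi (0 : ℝ), (φ₀' r - sin (φ₀ r) / r) ^ 2 * r) +
            2 * ∫ r in Ioi (0 : ℝ), φ₀' r * sin (φ₀ r)) := by
        rw [integral_add hint₁ hsum, integral_add hdev hcross, integral_const_mul]
    _ = _ := by
        rw [integral_Ioi_deriv_mul_sin hderiv hcross₀ h0 hinf, cos_zero, cos_pi]
        ring

/-- Equality in the Bogomolny bound: with `φ₀(0⁺) = 0`, `φ₀(∞) = π` and the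
energy pieces integrable, `E(φ₀,φ₁) = 4π` holds if and only if `φ₁ = 0` on
`(0,∞)` and `φ₀ r = 2 arctan (r/λ)` on `(0,∞)` for some `λ > 0`. -/
theorem stmt_5 (φ₀ φ₁ φ₀' : ℝ → ℝ)
    (hderiv : ∀ r ∈ Ioi (0 : ℝ), HasDerivAt φ₀ (φ₀' r) r)
    (h0 : Filter.Tendsto φ₀ (nhdsWithin 0 (Ioi 0)) (nhds 0))
    (hinf : Filter.Tendsto φ₀ Filter.atTop (nhds Real.pi))
    (hcont : ContinuousOn φ₁ (Ioi 0))
    (hint1 : IntegrableOn (fun r => φ₁ r ^ 2 * r) (Ioi 0))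
    (hint2 : IntegrableOn (fun r => φ₀' r ^ 2 * r) (Ioi 0))
    (hint3 : IntegrableOn (fun r => Real.sin (φ₀ r) ^ 2 / r ^ 2 * r) (Ioi 0)) :
    (Real.pi * ∫ r in Ioi (0 : ℝ),
        (φ₁ r ^ 2 + φ₀' r ^ 2 + Real.sin (φ₀ r) ^ 2 / r ^ 2) * r = 4 * Real.pi)
      ↔ ((∀ r ∈ Ioi (0 : ℝ), φ₁ r = 0) ∧
          ∃ lam > (0 : ℝ), ∀ r ∈ Ioi (0 : ℝ), φ₀ r = 2 * Real.arctan (r / lam)) := by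
  have hdev := integrableOn_deriv_sub_sin_div_sq_mul hderiv hint2 hint3
  have hφ₁ : φ₁ =ᵐ[volume.restrict (Ioi 0)] 0 ↔ ∀ r ∈ Ioi (0 : ℝ), φ₁ r = 0 :=
    ⟨fun h => Measure.eqOn_open_of_ae_eq h isOpen_Ioi hcont continuousOn_const,
      fun h => (ae_restrict_iff' measurableSet_Ioi).2 (Eventually.of_forall h)⟩
  have hode : (fun r => φ₀' r - sin (φ₀ r) / r) =ᵐ[volume.restrict (Ioi 0)] 0 ↔
      ∀ r ∈ Ioi (0 : ℝ), φ₀' r = sin (φ₀ r) / r := by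
    have hcont' : ContinuousOn (fun r => sin (φ₀ r) / r) (Ioi 0) :=
      (continuous_sin.comp_continuousOn (HasDerivAt.continuousOn hderiv)).div continuousOn_id
        fun r hr => ne_of_gt hr
    refine (eventuallyEq_iff_sub (g := fun r => sin (φ₀ r) / r)).symm.trans
      ⟨eqOn_of_hasDerivAt_of_ae_eq isOpen_Ioi hderiv hcont',
        fun h => (ae_restrict_iff' measurableSet_Ioi).2 (Eventually.of_forall h)⟩
  have hA : 0 ≤ ∫ r in Ioi (0 : ℝ), φ₁ r ^ 2 * r :=
    setIntegral_nonneg measurableSet_Ioi fun r (hr : 0 < r) => mul_nonneg (sq_nonneg _) hr.le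
  have hB : 0 ≤ ∫ r in Ioi (0 : ℝ), (φ₀' r - sin (φ₀ r) / r) ^ 2 * r :=
    setIntegral_nonneg measurableSet_Ioi fun r (hr : 0 < r) => mul_nonneg (sq_nonneg _) hr.le
  rw [integral_energy_eq hderiv h0 hinf hint1 hint2 hint3,
    ← forall_deriv_eq_sin_div_iff hderiv h0 hinf, ← hφ₁, ← hode,
    ← setIntegral_sq_mul_eq_zero_iff hint1, ← setIntegral_sq_mul_eq_zero_iff hdev,
    ← add_eq_zero_iff_of_nonneg hA hB]
  exact ⟨fun h => by nlinarith [pi_pos], fun h => by rw [h]; ring⟩
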